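/- arXiv:1804.09701 — 3 statements merged into one kernel-verified Lean document; each statement's English description precedes it below -/
import Mathlib

section
/- If v is a nonzero vector of an n-dimensional vector space V over the field with 2 elements whose support (set of basis vectors with nonzero coefficient) has size s, then the degree of v in the non-zero component graph G(V) is (2^s - 1)·2^(n-s) - 1. -/
open Finset

/-- Vertices of the non-zero component graph: nonzero vectors of `V = (Fin n → ZMod 2)`. -/
abbrev Vtx (n : ℕ) := {v : Fin n → ZMod 2 // v ≠ 0}

/-- The support (skeleton) of a vector: basis vectors with nonzero coefficient. -/
def supp {n : ℕ} (v : Fin n → ZMod 2) : Finset (Fin n) :=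
  Finset.univ.filter (fun i => v i ≠ 0)

/-- The non-zero component graph of an `n`-dimensional vector space over `F_2`:
two distinct nonzero vectors are adjacent iff their supports intersect. -/
def NZC (n : ℕ) : SimpleGraph (Vtx n) where
  Adj u v := u ≠ v ∧ ∃ i, u.1 i ≠ 0 ∧ v.1 i ≠ 0
  symm := by
    refine ⟨?_⟩
    rintro u v ⟨h1, i, h2, h3⟩
    exact ⟨h1.symm, i, h3, h2⟩
  loopless := by
    refine ⟨?_⟩
    rintro u ⟨h, -⟩
    exact h rfl

instance {n : ℕ} : DecidableRel (NZC n).Adj := fun u v =>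
  decidable_of_iff (u ≠ v ∧ ∃ i, u.1 i ≠ 0 ∧ v.1 i ≠ 0) Iff.rfl

/-! The neighbours of `v` are the vectors other than `v` whose support meets `supp v`. The vectors
vanishing on `supp v` are free on the remaining `n - s` coordinates, so `2 ^ n - 2 ^ (n - s)`
vectors meet `supp v`, and `v` itself is one of them. -/

section VanishingCount

variable {ι K : Type*} [Fintype ι] [DecidableEq ι] [Fintype K] [DecidableEq K] [Zero K]

theorem card_filter_forall_mem_eq_zero (S : Finset ι) :
    #{f : ι → K | ∀ i ∈ S, f i = 0} = Fintype.card K ^ (Fintype.card ι - #S) := by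
  have hpi : ({f : ι → K | ∀ i ∈ S, f i = 0} : Finset (ι → K)) =
      Fintype.piFinset fun i => if i ∈ S then {0} else univ := by
    ext f
    simp only [mem_filter, mem_univ, true_and, Fintype.mem_piFinset]
    refine forall_congr' fun i => ?_
    split_ifs with hi <;> simp [hi]
  rw [hpi, Fintype.card_piFinset]
  simp only [apply_ite card, card_singleton, card_univ]
  rw [prod_ite, prod_const_one, one_mul, prod_const, filter_not,
    card_sdiff_of_subset (filter_subset _ _), card_univ, filter_mem_eq_of_subset (subset_univ S)]

theorem card_filter_exists_mem_ne_zero (S : Finset ι)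
    [DecidablePred fun f : ι → K => ∃ i ∈ S, f i ≠ 0] :
    #{f : ι → K | ∃ i ∈ S, f i ≠ 0} =
      Fintype.card K ^ Fintype.card ι - Fintype.card K ^ (Fintype.card ι - #S) := by
  rw [← card_filter_forall_mem_eq_zero, ← Fintype.card_fun, ← card_univ,
    ← card_filter_add_card_filter_not (s := univ) (fun f : ι → K => ∃ i ∈ S, f i ≠ 0)]
  simp only [not_exists, not_and, not_not, Nat.add_sub_cancel]

end VanishingCount

theorem NZC.neighborFinset_map_subtype (n : ℕ) (v : Vtx n) :
    ((NZC n).neighborFinset v).map (Function.Embedding.subtype _) =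
      ({f | ∃ i ∈ supp v.1, f i ≠ 0} : Finset (Fin n → ZMod 2)).erase v.1 := by
  ext f
  simp only [mem_map, SimpleGraph.mem_neighborFinset, Function.Embedding.subtype_apply, mem_erase,
    mem_filter, mem_univ, true_and, supp]
  constructor
  · rintro ⟨u, ⟨hne, i, hvi, hui⟩, rfl⟩
    exact ⟨fun h => hne (Subtype.ext h.symm), i, hvi, hui⟩
  · rintro ⟨hne, i, hvi, hfi⟩
    exact ⟨⟨f, fun h => hfi (by simp [h])⟩,
      ⟨fun h => hne (congrArg Subtype.val h).symm, i, hvi, hfi⟩, rfl⟩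

/-- The degree of a vertex with support of size `s` is `(2^s - 1) * 2^(n-s) - 1`. -/
theorem degree_eq (n : ℕ) (v : Vtx n) :
    (NZC n).degree v = (2 ^ (supp v.1).card - 1) * 2 ^ (n - (supp v.1).card) - 1 := by
  have hv : v.1 ∈ ({f | ∃ i ∈ supp v.1, f i ≠ 0} : Finset (Fin n → ZMod 2)) := by
    obtain ⟨i, hi⟩ := Function.ne_iff.mp v.2
    simpa [supp] using ⟨i, hi⟩
  have hs : #(supp v.1) ≤ n := by simpa using card_le_univ (supp v.1)
  rw [← SimpleGraph.card_neighborFinset_eq_degree, ← card_map (Function.Embedding.subtype _),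
    NZC.neighborFinset_map_subtype, card_erase_of_mem hv, card_filter_exists_mem_ne_zero,
    ZMod.card, Fintype.card_fin, Nat.sub_one_mul, ← pow_add, Nat.add_sub_cancel' hs]
end

section
/- For every positive integer N there exists a finite graph G such that fxd(G) − fix(G) ≥ N, where fix(G) is the fixing number (minimum size of a set of vertices whose pointwise stabilizer in Aut(G) is trivial) and fxd(G) is the fixed number (minimum k such that every k-subset of vertices is a fixing set). -/
/-- `D` is a fixing set of `G` if the only automorphism of `G` fixing
every vertex of `D` is the identity. -/
def IsFixingSet {V : Type*} (G : SimpleGraph V) (D : Set V) : Prop :=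
  ∀ g : G ≃g G, (∀ v ∈ D, g v = v) → ∀ v, g v = v

/-- The fixing number: minimum cardinality of a fixing set. -/
noncomputable def fixingNumber {V : Type*} [Fintype V] (G : SimpleGraph V) : ℕ :=
  sInf {k | ∃ D : Finset V, D.card = k ∧ IsFixingSet G ↑D}

/-- The fixed number: minimum `k` such that every `k`-subset of vertices is a fixing set. -/
noncomputable def fixedNumber {V : Type*} [Fintype V] (G : SimpleGraph V) : ℕ :=
  sInf {k | ∀ D : Finset V, D.card = k → IsFixingSet G ↑D}

/-!
Take `n` disjoint edges. Choosing one endpoint of every edge fixes the graph, so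
`fix ≤ n`; but swapping the endpoints of a single edge is an automorphism fixing the
other `2n - 2` vertices, so `fxd ≥ 2n - 1`.
-/

section FixingNumbers

variable {V : Type*} [Fintype V] {G : SimpleGraph V}

theorem fixingNumber_le_card {D : Finset V} (hD : IsFixingSet G D) :
    fixingNumber G ≤ D.card :=
  Nat.sInf_le ⟨D, rfl, hD⟩

theorem isFixingSet_of_card_eq_fixedNumber (D : Finset V) (hD : D.card = fixedNumber G) :
    IsFixingSet G D := by
  refine Nat.sInf_mem (s := {k | ∀ D : Finset V, D.card = k → IsFixingSet G ↑D})
    ⟨Fintype.card V, fun E hE g _ v => ?_⟩ D hD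
  grind [Finset.eq_univ_of_card E hE]

theorem card_lt_fixedNumber {g : G ≃g G} {v : V} (hv : g v ≠ v) {B : Finset V}
    (hB : ∀ w ∈ B, g w = w) : B.card < fixedNumber G := by
  by_contra! hle
  obtain ⟨D, hDB, hD⟩ := Finset.exists_subset_card_eq hle
  exact hv (isFixingSet_of_card_eq_fixedNumber D hD g (fun w hw => hB w (hDB hw)) v)

end FixingNumbers

/-- The disjoint union of edges `{(a, false), (a, true)}`, one for each `a : α`. -/
def disjointEdges (α : Type*) : SimpleGraph (α × Bool) where
  Adj x y := x.1 = y.1 ∧ x.2 ≠ y.2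
  symm := ⟨fun _ _ h => ⟨h.1.symm, h.2.symm⟩⟩
  loopless := ⟨fun _ h => h.2 rfl⟩

namespace disjointEdges

variable {α : Type*}

@[simp] theorem adj_iff {x y : α × Bool} : (disjointEdges α).Adj x y ↔ x.1 = y.1 ∧ x.2 ≠ y.2 :=
  Iff.rfl

theorem isFixingSet_true : IsFixingSet (disjointEdges α) (Set.univ ×ˢ {true}) := by
  intro g hg
  have hfix (a : α) : g (a, true) = (a, true) := hg (a, true) (by simp)
  rintro ⟨a, _ | _⟩
  · -- `(a, false)` is the only neighbour of the fixed vertex `(a, true)`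
    have hadj : (disjointEdges α).Adj (g (a, false)) (a, true) := by
      rw [← hfix a, g.map_adj_iff]
      exact ⟨rfl, Bool.false_ne_true⟩
    exact Prod.ext hadj.1 (by simpa using hadj.2)
  · exact hfix a

theorem fixingNumber_le [Fintype α] : fixingNumber (disjointEdges α) ≤ Fintype.card α := by
  simpa using fixingNumber_le_card (D := (Finset.univ : Finset α) ×ˢ {true})
    (by rw [Finset.coe_product, Finset.coe_univ, Finset.coe_singleton]; exact isFixingSet_true)

variable [DecidableEq α]

def flipAt (i : α) : disjointEdges α ≃g disjointEdges α where
  toEquiv := Equiv.swap (i, false) (i, true)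
  map_rel_iff' {x y} := by
    obtain ⟨a, b⟩ := x
    obtain ⟨c, d⟩ := y
    simp only [adj_iff, Equiv.swap_apply_def]
    split_ifs <;> grind

theorem flipAt_apply_true (i : α) : flipAt i (i, true) = (i, false) :=
  Equiv.swap_apply_right _ _

theorem flipAt_apply_of_ne {i : α} {x : α × Bool} (hx : x.1 ≠ i) : flipAt i x = x :=
  Equiv.swap_apply_of_ne_of_ne (fun h => hx (congrArg Prod.fst h))
    (fun h => hx (congrArg Prod.fst h))

theorem card_sub_one_mul_two_lt_fixedNumber [Fintype α] (i : α) :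
    (Fintype.card α - 1) * 2 < fixedNumber (disjointEdges α) := by
  simpa using card_lt_fixedNumber (v := (i, true)) (B := (Finset.univ.erase i) ×ˢ Finset.univ)
    (by simp [flipAt_apply_true])
    (fun x hx => flipAt_apply_of_ne (Finset.ne_of_mem_erase (Finset.mem_product.1 hx).1))

end disjointEdges

open disjointEdges in
theorem exists_graph_fxd_sub_fix_ge_general (N : ℕ) :
    ∃ (V : Type) (_ : Fintype V) (G : SimpleGraph V),
      N ≤ fixedNumber G - fixingNumber G := by
  refine ⟨Fin (N + 1) × Bool, inferInstance, disjointEdges (Fin (N + 1)), ?_⟩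
  have hfix := fixingNumber_le (α := Fin (N + 1))
  have hfxd := card_sub_one_mul_two_lt_fixedNumber (0 : Fin (N + 1))
  simp only [Fintype.card_fin, Nat.add_sub_cancel] at hfix hfxd
  omega

/-- For every positive integer `N` there is a finite graph `G` with
`fxd(G) - fix(G) ≥ N`. -/
theorem exists_graph_fxd_sub_fix_ge (N : ℕ) (hN : 0 < N) :
    ∃ (V : Type) (_ : Fintype V) (G : SimpleGraph V),
      N ≤ fixedNumber G - fixingNumber G :=
  exists_graph_fxd_sub_fix_ge_general N
end

section
/- Let G be a connected graph of order n with fix(G) = fxd(G) = k. Then the fixing graph F(G) has at most n·(C(n,2) − k + 1) edges. -/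
/-- The orbit of `v` under the automorphism group of `G`. -/
def autOrbit {V : Type*} (G : SimpleGraph V) (v : V) : Set V :=
  {w | ∃ g : G ≃g G, g v = w}

/-- The orbit of `v` under the stabilizer of `x` in the automorphism group of `G`. -/
def stabOrbit {V : Type*} (G : SimpleGraph V) (x v : V) : Set V :=
  {w | ∃ g : G ≃g G, g x = x ∧ g v = w}

/-- `S(G)`: the set of vertices with orbit of size at least 2. -/
def movable {V : Type*} (G : SimpleGraph V) : Set V :=
  {v | ∃ g : G ≃g G, g v ≠ v}

/-- The number of edges of the fixing graph `F(G)`: edges join a vertex `x ∈ S(G)` to an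
(unordered) pair `{u, v}` of distinct vertices of `S(G)` with equal orbits such that the
orbits of `u` and `v` under the stabilizer of `x` differ. -/
noncomputable def fixingGraphEdges {V : Type*} (G : SimpleGraph V) : ℕ :=
  Set.ncard {p : V × Sym2 V | ∃ u v, p.2 = s(u, v) ∧ u ≠ v ∧
    u ∈ movable G ∧ v ∈ movable G ∧ autOrbit G u = autOrbit G v ∧
    p.1 ∈ movable G ∧ stabOrbit G p.1 u ≠ stabOrbit G p.1 v}

/-!
If an automorphism `g` moves `w`, the pair `{w, g w}` lies in `V_s(G)`, and no vertex fixed by `g`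
separates it, i.e. distinguishes the orbits of `w` and `g w` under its stabilizer. A vertex of the
pair itself always separates it. So a vertex `x` together with one vertex from each pair of
`V_s(G)` that `x` does not separate is a fixing set: `x` leaves at least `fix(G) - 1` pairs
unseparated, hence has degree at most `C(n,2) - fix(G) + 1` in `F(G)`.
-/

lemma Set.ncard_setOf_snd_mem {α β : Type*} [Fintype α] [Finite β] (T : α → Set β) :
    {p : α × β | p.2 ∈ T p.1}.ncard = ∑ a, (T a).ncard := by
  classical
  have := Fintype.ofFinite β
  simp only [Set.ncard_eq_toFinset_card', Set.toFinset_ofPred, Finset.card_filter,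
    Fintype.sum_prod_type]
  refine Finset.sum_congr rfl fun a _ => ?_
  rw [← Finset.card_filter]
  congr 1
  ext
  simp

section FixingGraph

variable {V : Type*} (G : SimpleGraph V)

lemma mem_stabOrbit_self (x v : V) : v ∈ stabOrbit G x v :=
  ⟨RelIso.refl _, rfl, rfl⟩

lemma stabOrbit_self (x : V) : stabOrbit G x x = {x} := by
  ext z
  constructor
  · rintro ⟨g, hgx, rfl⟩
    exact hgx
  · rintro rfl
    exact mem_stabOrbit_self G z z

lemma stabOrbit_apply (g : G ≃g G) {x : V} (hx : g x = x) (w : V) :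
    stabOrbit G x (g w) = stabOrbit G x w := by
  have hx' : g.symm x = x := by rw [← hx, g.symm_apply_apply, hx]
  ext z
  constructor
  · rintro ⟨h, hhx, rfl⟩
    exact ⟨g.trans h, by simp [hx, hhx], rfl⟩
  · rintro ⟨h, hhx, rfl⟩
    exact ⟨g.symm.trans h, by simp [hx', hhx], by simp⟩

lemma autOrbit_apply (g : G ≃g G) (w : V) : autOrbit G (g w) = autOrbit G w := by
  ext z
  constructor
  · rintro ⟨h, rfl⟩
    exact ⟨g.trans h, rfl⟩
  · rintro ⟨h, rfl⟩
    exact ⟨g.symm.trans h, by simp⟩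

/-- `V_s(G)`, as unordered pairs. -/
def similarPairs : Set (Sym2 V) :=
  {s | ∃ u v, s = s(u, v) ∧ u ≠ v ∧ u ∈ movable G ∧ v ∈ movable G ∧
    autOrbit G u = autOrbit G v}

/-- The neighbourhood of `x` in `F(G)`, before intersecting with `V_s(G)`. -/
def separatedPairs (x : V) : Set (Sym2 V) :=
  {s | ∃ u v, s = s(u, v) ∧ stabOrbit G x u ≠ stabOrbit G x v}

lemma mk_apply_mem_similarPairs (g : G ≃g G) {w : V} (hw : g w ≠ w) :
    s(w, g w) ∈ similarPairs G :=
  ⟨w, g w, rfl, hw.symm, ⟨g, hw⟩, ⟨g.symm, by simpa using hw.symm⟩,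
    (autOrbit_apply G g w).symm⟩

lemma mk_apply_notMem_separatedPairs (g : G ≃g G) {y : V} (hy : g y = y) (w : V) :
    s(w, g w) ∉ separatedPairs G y := by
  rintro ⟨u, v, huv, hne⟩
  rcases Sym2.eq_iff.mp huv with ⟨rfl, rfl⟩ | ⟨rfl, rfl⟩ <;>
    exact hne (by rw [stabOrbit_apply G g hy])

lemma mk_mem_separatedPairs_of_mem {u v y : V} (huv : u ≠ v) (hy : y ∈ s(u, v)) :
    s(u, v) ∈ separatedPairs G y := by
  refine ⟨u, v, rfl, fun h => huv ?_⟩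
  rcases Sym2.mem_iff.mp hy with rfl | rfl
  · have hv : v ∈ stabOrbit G y y := h ▸ mem_stabOrbit_self G y v
    rw [stabOrbit_self] at hv
    exact hv.symm
  · have hu : u ∈ stabOrbit G y y := h.symm ▸ mem_stabOrbit_self G y u
    rw [stabOrbit_self] at hu
    exact hu

lemma isFixingSet_of_meets_similarPairs_diff {x : V} {D : Set V} (hx : x ∈ D)
    (hD : ∀ s ∈ similarPairs G \ separatedPairs G x, ∃ y ∈ D, y ∈ s) : IsFixingSet G D := by
  intro g hg
  by_contra! ⟨w, hw⟩
  have hs : s(w, g w) ∈ similarPairs G \ separatedPairs G x :=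
    ⟨mk_apply_mem_similarPairs G g hw, mk_apply_notMem_separatedPairs G g (hg x hx) w⟩
  obtain ⟨y, hyD, hy⟩ := hD _ hs
  exact mk_apply_notMem_separatedPairs G g (hg y hyD) w
    (mk_mem_separatedPairs_of_mem G hw.symm hy)

variable [Fintype V]

lemma fixingNumber_le_ncard_similarPairs_diff_add_one (x : V) :
    fixingNumber G ≤ (similarPairs G \ separatedPairs G x).ncard + 1 := by
  classical
  set P := (similarPairs G \ separatedPairs G x).toFinset
  let D : Finset V := insert x (P.image fun s => s.out.1)
  have hD : IsFixingSet G ↑D := by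
    refine isFixingSet_of_meets_similarPairs_diff G (Finset.mem_insert_self x _) fun s hs => ?_
    refine ⟨s.out.1, Finset.mem_insert_of_mem ?_, s.out_fst_mem⟩
    exact Finset.mem_image_of_mem _ (Set.mem_toFinset.mpr hs)
  calc fixingNumber G ≤ D.card := Nat.sInf_le ⟨D, rfl, hD⟩
    _ ≤ P.card + 1 := (Finset.card_insert_le _ _).trans (by grw [Finset.card_image_le])
    _ = _ := by rw [Set.ncard_eq_toFinset_card']

lemma ncard_similarPairs_le : (similarPairs G).ncard ≤ (Fintype.card V).choose 2 := by
  classical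
  have hsub : similarPairs G ⊆ {s | ¬ s.IsDiag} := by
    rintro _ ⟨u, v, rfl, huv, -⟩
    simpa using huv
  calc (similarPairs G).ncard ≤ {s : Sym2 V | ¬ s.IsDiag}.ncard := Set.ncard_le_ncard hsub
    _ = (Fintype.card V).choose 2 := by
      rw [← Nat.card_coe_set_eq, Nat.card_eq_fintype_card, ← Sym2.card_subtype_not_diag]
      rfl

lemma ncard_similarPairs_inter_separatedPairs_le (x : V) :
    (similarPairs G ∩ separatedPairs G x).ncard ≤
      (Fintype.card V).choose 2 - fixingNumber G + 1 := by
  have hsplit := Set.ncard_inter_add_ncard_sdiff_eq_ncard (similarPairs G) (separatedPairs G x)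
  have hfix := fixingNumber_le_ncard_similarPairs_diff_add_one G x
  have hsim := ncard_similarPairs_le G
  omega

lemma fixingGraphEdges_le_sum :
    fixingGraphEdges G ≤ ∑ x, (similarPairs G ∩ separatedPairs G x).ncard :=
  calc fixingGraphEdges G
      ≤ {p : V × Sym2 V | p.2 ∈ similarPairs G ∩ separatedPairs G p.1}.ncard := by
        refine Set.ncard_le_ncard ?_
        rintro ⟨x, s⟩ ⟨u, v, hs, huv, hu, hv, horb, -, hsep⟩
        exact ⟨⟨u, v, hs, huv, hu, hv, horb⟩, u, v, hs, hsep⟩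
    _ = _ := Set.ncard_setOf_snd_mem fun x => similarPairs G ∩ separatedPairs G x

end FixingGraph

theorem fixingGraph_edge_bound_general {V : Type*} [Fintype V] (G : SimpleGraph V) (n k : ℕ)
    (hn : Fintype.card V = n) (hfix : fixingNumber G = k) :
    fixingGraphEdges G ≤ n * (n.choose 2 - k + 1) := by
  subst hn hfix
  calc fixingGraphEdges G ≤ ∑ x, (similarPairs G ∩ separatedPairs G x).ncard :=
        fixingGraphEdges_le_sum G
    _ ≤ ∑ _x : V, ((Fintype.card V).choose 2 - fixingNumber G + 1) :=
        Finset.sum_le_sum fun x _ => ncard_similarPairs_inter_separatedPairs_le G x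
    _ = _ := by rw [Finset.sum_const, Finset.card_univ, smul_eq_mul]

/-- If `G` is a connected graph of order `n` with `fix(G) = fxd(G) = k`, then its fixing
graph has at most `n * (C(n,2) - k + 1)` edges. -/
theorem fixingGraph_edge_bound {V : Type*} [Fintype V] (G : SimpleGraph V) (n k : ℕ)
    (hconn : G.Connected) (hn : Fintype.card V = n)
    (hfix : fixingNumber G = k) (hfxd : fixedNumber G = k) :
    fixingGraphEdges G ≤ n * (n.choose 2 - k + 1) :=
  fixingGraph_edge_bound_general G n k hn hfix
end
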